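/- arXiv:1809.05978 — 2 statements merged into one kernel-verified Lean document; each statement's English description precedes it below -/
import Mathlib

section
/- Let Γ be a finite type, σ a finite type, and A : DFA (Γ × Γ) σ a minimal two-tape DFA recognizing an indistinguishability relation ~ on Γ. Then for all histories τ, τ' of equal length with τ ~ τ' that are not interchangeable, the state A.eval (List.zip τ τ') is ambiguous: there exists a history π with A.evalFrom (A.eval (List.zip τ τ')) (diag π) ∉ A.accept. -/
/-- The diagonal word `(c₁,c₁)…(c_ℓ,c_ℓ)` of a history `c₁…c_ℓ`. -/
def diag {Γ : Type*} (τ : List Γ) : List (Γ × Γ) := τ.map fun c => (c, c)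

lemma diag_eq_zip {Γ : Type*} (τ : List Γ) : diag τ = τ.zip τ := by
  induction τ with
  | nil => rfl
  | cons a t ih => simp [diag] at *; exact ih

/-- in a minimal two-tape DFA recognising an indistinguishability
relation, the state reached on an indistinguishable but non-interchangeable
pair of histories is ambiguous. -/
theorem non_interchangeable_is_ambiguous {Γ σ : Type*} [Fintype Γ] [Fintype σ]
    (A : DFA (Γ × Γ) σ) (sim : List Γ → List Γ → Prop)
    (hequiv : Equivalence sim)
    (hlen : ∀ τ τ', sim τ τ' → τ.length = τ'.length)
    (hpre : ∀ τ τ' ρ ρ' : List Γ, sim τ τ' → ρ <+: τ → ρ' <+: τ' →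
      ρ.length = ρ'.length → sim ρ ρ')
    (hrec : ∀ τ τ' : List Γ, τ.length = τ'.length →
      (sim τ τ' ↔ List.zip τ τ' ∈ A.accepts))
    (hreach : ∀ q : σ, ∃ w : List (Γ × Γ), A.evalFrom A.start w = q)
    (hmin : ∀ q q' : σ,
      (∀ w : List (Γ × Γ), A.evalFrom q w ∈ A.accept ↔ A.evalFrom q' w ∈ A.accept) →
      q = q') :
    ∀ τ τ' : List Γ, τ.length = τ'.length → sim τ τ' →
      ¬ (∀ π : List Γ, π.length = τ.length →
          A.eval (List.zip τ π) = A.eval (List.zip τ' π)) →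
      ∃ π : List Γ, A.evalFrom (A.eval (List.zip τ τ')) (diag π) ∉ A.accept := by
  intro τ τ' hl hsim hnint
  by_contra hcon
  push_neg at hcon
  -- From hcon: τ ++ ρ ~ τ' ++ ρ for every ρ
  have hext : ∀ ρ : List Γ, sim (τ ++ ρ) (τ' ++ ρ) := by
    intro ρ
    have h1 := hcon ρ
    rw [diag_eq_zip] at h1
    have h2 : A.eval (List.zip (τ ++ ρ) (τ' ++ ρ)) ∈ A.accept := by
      rw [List.zip_append hl, DFA.eval, DFA.evalFrom_of_append]
      exact h1
    have := (hrec (τ ++ ρ) (τ' ++ ρ) (by simp [hl])).mpr (by rwa [DFA.mem_accepts])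
    exact this
  apply hnint
  intro π hπ
  apply hmin
  intro w
  set α := w.map Prod.fst with hα
  set β := w.map Prod.snd with hβ
  have hw : w = List.zip α β := by
    rw [hα, hβ]
    induction w with
    | nil => rfl
    | cons a t ih => simpa using ih
  have hlα : α.length = w.length := by simp [hα]
  have hlβ : β.length = w.length := by simp [hβ]
  have key : ∀ ρ : List Γ, ρ.length = τ.length →
      (A.evalFrom (A.eval (List.zip ρ π)) w ∈ A.accept ↔ sim (ρ ++ α) (π ++ β)) := by
    intro ρ hρ
    have hlen2 : (ρ ++ α).length = (π ++ β).length := by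
      simp [hρ, hπ, hlα, hlβ]
    rw [hrec _ _ hlen2, DFA.mem_accepts,
      List.zip_append (by rw [hρ, hπ]), ← hw]
    show A.evalFrom (A.evalFrom A.start (ρ.zip π)) w ∈ A.accept ↔
        A.evalFrom A.start (ρ.zip π ++ w) ∈ A.accept
    rw [DFA.evalFrom_of_append]
  rw [key τ rfl, key τ' hl.symm]
  constructor
  · intro h
    exact hequiv.trans (hequiv.symm (hext α)) h
  · intro h
    exact hequiv.trans (hext α) h
end

section
/- Let Γ and Σ be types, ~ an indistinguishability relation on Γ, and (Q, δ : Q → Γ → Q, q₀ : Q, lam : Q → Γ → Σ) Mealy data with Q finite defining an observation function β with β̂ τ = β̂ τ' ↔ τ ~ τ' for all histories τ, τ'. Let S be a finite set of histories, pairwise ~-related, such that for all distinct x, y ∈ S there exists a suffix π with ¬((x ++ π) ~ (y ++ π)) (S is an ambiguous clique). Then S.card ≤ Fintype.card Q. -/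
/-- The observation-history extension of an observation function `β`. -/
def obsHist {Γ Ob : Type*} (β : List Γ → Ob) (τ : List Γ) : List Ob :=
  (List.range τ.length).map fun i => β (τ.take (i + 1))

lemma obsHist_append_singleton {Γ Ob : Type*} (β : List Γ → Ob) (τ : List Γ) (c : Γ) :
    obsHist β (τ ++ [c]) = obsHist β τ ++ [β (τ ++ [c])] := by
  unfold obsHist
  rw [List.length_append, List.length_singleton, List.range_succ, List.map_append]
  congr 1
  · apply List.map_congr_left
    intro i hi
    rw [List.mem_range] at hi
    rw [List.take_append_of_le_length (by omega)]
  · simp only [List.map_cons, List.map_nil]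
    rw [List.take_of_length_le (by simp)]

/-- any ambiguous clique for an indistinguishability relation
represented by a Mealy automaton has at most as many elements as the automaton
has states. -/
theorem ambiguous_clique_le_states {Γ Ob Q : Type*} [Fintype Q]
    (sim : List Γ → List Γ → Prop)
    (hequiv : Equivalence sim)
    (hlen : ∀ τ τ', sim τ τ' → τ.length = τ'.length)
    (hpre : ∀ τ τ' ρ ρ' : List Γ, sim τ τ' → ρ <+: τ → ρ' <+: τ' →
      ρ.length = ρ'.length → sim ρ ρ')
    (δ : Q → Γ → Q) (q₀ : Q) (lam : Q → Γ → Ob) (β : List Γ → Ob)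
    (hβ : ∀ (τ : List Γ) (c : Γ), β (τ ++ [c]) = lam (List.foldl δ q₀ τ) c)
    (hker : ∀ τ τ' : List Γ, obsHist β τ = obsHist β τ' ↔ sim τ τ')
    (S : Finset (List Γ))
    (hclique : ∀ x ∈ S, ∀ y ∈ S, x ≠ y →
      sim x y ∧ ∃ π : List Γ, ¬ sim (x ++ π) (y ++ π)) :
    S.card ≤ Fintype.card Q := by
  classical
  rw [← Finset.card_univ (α := Q)]
  apply Finset.card_le_card_of_injOn (fun x => List.foldl δ q₀ x)
    (fun _ _ => Finset.mem_univ _)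
  intro x hx y hy hfold
  simp only at hfold
  by_contra hxy
  obtain ⟨hsim, π, hπ⟩ := hclique x hx y hy hxy
  apply hπ
  rw [← hker]
  clear hπ
  induction π using List.reverseRecOn with
  | nil => simpa [hker] using hsim
  | append_singleton π c ih =>
    rw [← List.append_assoc, ← List.append_assoc,
      obsHist_append_singleton, obsHist_append_singleton, ih,
      hβ, hβ, List.foldl_append, List.foldl_append, hfold]
end
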